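/- Let d ≥ 2 and γ ∈ (0,1). There exists a constant ω₀ ≥ 0, depending only on d and γ, with the following property: for every open set Ω ⊆ ℝ^d, every ϱ ∈ ℝ, every φ ∈ C_c^∞(ℝ^d; ℝ) with ‖∂_jφ‖_∞ ≤ 1 for j = 1,…,d, and every continuously differentiable u : Ω → ℂ^d such that u ∈ L²(Ω;ℂ^d), D_-(u) ∈ L²(Ω;ℂ^{d×d}) and div u ∈ L²(Ω), the quantities a(u,u) := (1/2)∫_Ω |D_-(u)|² dx + ∫_Ω |div u|² dx and a_{ϱφ}(u,u) := (1/2)∫_Ω D_-(e^{ϱφ}u) : \overline{D_-(e^{−ϱφ}u)} dx + ∫_Ω div(e^{ϱφ}u)·\overline{div(e^{−ϱφ}u)} dx are given by absolutely convergent integrals and satisfy |a_{ϱφ}(u,u) − a(u,u)| ≤ γ·a(u,u) + ω₀·ϱ²·‖u‖_{L²(Ω)}². -/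

import Mathlib

/-!
At every point of `Ω`, the product rule gives `D_-(e^{±ϱφ}u) = e^{±ϱφ}(D_-u ± ϱB)` with
`B_{jk} = ∂_jφ u_k − ∂_kφ u_j`, and `div(e^{±ϱφ}u) = e^{±ϱφ}(div u ± ϱ ∇φ·u)`. The exponentials
cancel in the twisted products, and `(a + ϱb)·conj(a − ϱb) − |a|² = ϱ(b ā − a b̄) − ϱ²|b|²`,
which Young's inequality bounds by `γ|a|² + (1/γ + 1)ϱ²|b|²`. Since `|∂_jφ| ≤ 1`,
`|B|² ≤ 4d|u|²` and `|∇φ·u|² ≤ d|u|²`, so integrating gives the estimate with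
`ω₀ = 3d(1 + 1/γ)`.
-/

open MeasureTheory Complex Filter Topology
open scoped BigOperators ComplexConjugate

noncomputable section

/-- The domain `ℝ^d`. -/
abbrev Edom (d : ℕ) := EuclideanSpace ℝ (Fin d)

/-- The `j`-th partial derivative of a scalar function. -/
def pd {d : ℕ} (j : Fin d) (f : Edom d → ℂ) (x : Edom d) : ℂ :=
  fderiv ℝ f x (EuclideanSpace.single j 1)

/-- The matrix `D_-(u)` with entries `(D_-(u))_{jk} = ∂_j u_k − ∂_k u_j`. -/
def Dm {d : ℕ} (u : Edom d → Fin d → ℂ) (j k : Fin d) (x : Edom d) : ℂ :=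
  pd j (fun y => u y k) x - pd k (fun y => u y j) x

/-- The divergence `div u = ∑_j ∂_j u_j`. -/
def divg {d : ℕ} (u : Edom d → Fin d → ℂ) (x : Edom d) : ℂ :=
  ∑ j, pd j (fun y => u y j) x

/-- The componentwise Laplacian `(Δu)_k = ∑_j ∂_j ∂_j u_k`. -/
def vLap {d : ℕ} (u : Edom d → Fin d → ℂ) (k : Fin d) (x : Edom d) : ℂ :=
  ∑ j, pd j (fun y => pd j (fun z => u z k) y) x

/-- The twisted field `e^{ϱφ} u`. -/
def tw {d : ℕ} (ϱ : ℝ) (φ : Edom d → ℝ) (u : Edom d → Fin d → ℂ) :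
    Edom d → Fin d → ℂ :=
  fun x j => (Real.exp (ϱ * φ x) : ℂ) * u x j

theorem norm_add_mul_conj_sub_mul_sub_normSq_le {γ : ℝ} (hγ : 0 < γ) (t : ℝ) (a b : ℂ) :
    ‖(a + t * b) * conj (a - t * b) - normSq a‖
      ≤ γ * normSq a + (1 / γ + 1) * t ^ 2 * normSq b := by
  have hexpand : (a + t * b) * conj (a - t * b) - normSq a
      = t * (b * conj a - a * conj b) - (t ^ 2 * normSq b : ℝ) := by
    simp only [map_sub, map_mul, conj_ofReal, ofReal_mul, ofReal_pow, ← mul_conj]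
    ring
  have hcross : ‖b * conj a - a * conj b‖ ≤ 2 * (‖a‖ * ‖b‖) := by
    refine (norm_sub_le _ _).trans (le_of_eq ?_)
    simp only [norm_mul, RCLike.norm_conj]
    ring
  have hyoung : γ * (|t| * (2 * (‖a‖ * ‖b‖))) ≤ γ * (γ * ‖a‖ ^ 2 + t ^ 2 / γ * ‖b‖ ^ 2) := by
    rw [mul_add, ← mul_assoc γ (t ^ 2 / γ), mul_div_cancel₀ _ hγ.ne']
    nlinarith [sq_nonneg (γ * ‖a‖ - |t| * ‖b‖), sq_abs t]
  rw [hexpand, normSq_eq_norm_sq, normSq_eq_norm_sq]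
  calc _ ≤ |t| * ‖b * conj a - a * conj b‖ + t ^ 2 * ‖b‖ ^ 2 := by
        refine (norm_sub_le _ _).trans (le_of_eq ?_)
        rw [norm_mul, norm_real, norm_real, Real.norm_eq_abs, Real.norm_of_nonneg (by positivity)]
    _ ≤ |t| * (2 * (‖a‖ * ‖b‖)) + t ^ 2 * ‖b‖ ^ 2 := by gcongr
    _ ≤ _ := by
        have := le_of_mul_le_mul_left hyoung hγ
        rw [div_mul_eq_mul_div] at this
        linarith [show (1 / γ + 1) * t ^ 2 * ‖b‖ ^ 2 = t ^ 2 * ‖b‖ ^ 2 / γ + t ^ 2 * ‖b‖ ^ 2 by ring]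

theorem norm_sum_add_mul_conj_sub_mul_sub_normSq_le {ι : Type*} [Fintype ι] {γ : ℝ}
    (hγ : 0 < γ) (t : ℝ) (a b : ι → ℂ) :
    ‖∑ i, (a i + t * b i) * conj (a i - t * b i) - ((∑ i, normSq (a i) : ℝ) : ℂ)‖
      ≤ γ * ∑ i, normSq (a i) + (1 / γ + 1) * t ^ 2 * ∑ i, normSq (b i) := by
  rw [ofReal_sum, ← Finset.sum_sub_distrib, Finset.mul_sum, Finset.mul_sum,
    ← Finset.sum_add_distrib]
  exact (norm_sum_le _ _).trans
    (Finset.sum_le_sum fun i _ => norm_add_mul_conj_sub_mul_sub_normSq_le hγ t (a i) (b i))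

theorem sum_sum_normSq_mul_sub_mul_le {ι : Type*} [Fintype ι] {g : ι → ℝ}
    (hg : ∀ i, |g i| ≤ 1) (v : ι → ℂ) :
    ∑ j, ∑ k, normSq (g j * v k - g k * v j) ≤ 4 * Fintype.card ι * ∑ j, normSq (v j) := by
  have hterm : ∀ j k, normSq (g j * v k - g k * v j) ≤ 2 * normSq (v k) + 2 * normSq (v j) := by
    intro j k
    have hscale : ∀ i i', ‖(g i : ℂ) * v i'‖ ≤ ‖v i'‖ := fun i i' => by
      rw [norm_mul, norm_real, Real.norm_eq_abs]
      exact mul_le_of_le_one_left (norm_nonneg _) (hg i)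
    have := (norm_sub_le _ _).trans (add_le_add (hscale j k) (hscale k j))
    simp only [normSq_eq_norm_sq]
    nlinarith [norm_nonneg (g j * v k - g k * v j), sq_nonneg (‖v k‖ - ‖v j‖)]
  calc _ ≤ ∑ j, ∑ k, (2 * normSq (v k) + 2 * normSq (v j)) :=
        Finset.sum_le_sum fun j _ => Finset.sum_le_sum fun k _ => hterm j k
    _ = _ := by
        simp only [Finset.sum_add_distrib, ← Finset.mul_sum, Finset.sum_const, Finset.card_univ,
          nsmul_eq_mul]
        ring

theorem normSq_sum_mul_le {ι : Type*} [Fintype ι] {g : ι → ℝ} (hg : ∀ i, |g i| ≤ 1)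
    (v : ι → ℂ) :
    normSq (∑ j, g j * v j) ≤ Fintype.card ι * ∑ j, normSq (v j) := by
  have hnorm : ‖∑ j, (g j : ℂ) * v j‖ ≤ ∑ j, ‖v j‖ := by
    refine (norm_sum_le _ _).trans (Finset.sum_le_sum fun j _ => ?_)
    rw [norm_mul, norm_real, Real.norm_eq_abs]
    exact mul_le_of_le_one_left (norm_nonneg _) (hg j)
  simp only [normSq_eq_norm_sq]
  calc _ ≤ (∑ j, ‖v j‖) ^ 2 := by gcongr
    _ ≤ _ := by simpa using sq_sum_le_card_mul_sum_sq (s := Finset.univ) (f := fun j => ‖v j‖)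

theorem integrable_and_norm_integral_sub_ofReal_le {α : Type*} [MeasurableSpace α]
    {μ : Measure α} {f : α → ℂ} {g w : α → ℝ} {γ K : ℝ} (hf : AEStronglyMeasurable f μ)
    (hg : Integrable g μ) (hw : Integrable w μ)
    (hbound : ∀ᵐ x ∂μ, ‖f x - g x‖ ≤ γ * g x + K * w x) :
    Integrable f μ ∧
      ‖∫ x, f x ∂μ - ((∫ x, g x ∂μ : ℝ) : ℂ)‖ ≤ γ * ∫ x, g x ∂μ + K * ∫ x, w x ∂μ := by
  have hmajorant : Integrable (fun x => γ * g x + K * w x) μ :=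
    (hg.const_mul γ).add (hw.const_mul K)
  have hg' : Integrable (fun x => (g x : ℂ)) μ := hg.ofReal
  have hdiff : Integrable (fun x => f x - g x) μ :=
    hmajorant.mono' (hf.sub hg'.aestronglyMeasurable) hbound
  have hf_int : Integrable f μ :=
    (hdiff.add hg').congr (.of_forall fun x => sub_add_cancel _ _)
  refine ⟨hf_int, ?_⟩
  rw [← integral_complex_ofReal, ← integral_sub hf_int hg']
  calc _ ≤ ∫ x, (γ * g x + K * w x) ∂μ := norm_integral_le_of_norm_le hmajorant hbound
    _ = _ := by
        rw [integral_add (hg.const_mul γ) (hw.const_mul K), integral_const_mul, integral_const_mul]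

theorem fderiv_ofReal_exp_mul_apply {E : Type*} [NormedAddCommGroup E] [NormedSpace ℝ E]
    {ψ : E → ℝ} {f : E → ℂ} {x : E} (hψ : DifferentiableAt ℝ ψ x)
    (hf : DifferentiableAt ℝ f x) (v : E) :
    fderiv ℝ (fun y => (Real.exp (ψ y) : ℂ) * f y) x v
      = Real.exp (ψ x) * (fderiv ℝ f x v + fderiv ℝ ψ x v * f x) := by
  have hexp : HasFDerivAt (fun y => (Real.exp (ψ y) : ℂ))
      (ofRealCLM.comp (Real.exp (ψ x) • fderiv ℝ ψ x)) x :=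
    ofRealCLM.hasFDerivAt.comp x hψ.hasFDerivAt.exp
  rw [(hexp.fun_mul hf.hasFDerivAt).fderiv]
  simp only [add_apply, smul_apply, ContinuousLinearMap.comp_apply, ofRealCLM_apply,
    smul_eq_mul, ofReal_mul]
  ring

def pdR {d : ℕ} (j : Fin d) (φ : Edom d → ℝ) (x : Edom d) : ℝ :=
  fderiv ℝ φ x (EuclideanSpace.single j 1)

section Twist

variable {d : ℕ} {ϱ : ℝ} {φ : Edom d → ℝ} {u : Edom d → Fin d → ℂ} {x : Edom d}

theorem pd_tw (hφ : DifferentiableAt ℝ φ x) (hu : DifferentiableAt ℝ u x) (j k : Fin d) :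
    pd j (fun y => tw ϱ φ u y k) x
      = Real.exp (ϱ * φ x) * (pd j (fun y => u y k) x + ϱ * (pdR j φ x * u x k)) := by
  have huk : DifferentiableAt ℝ (fun y => u y k) x := differentiableAt_pi.1 hu k
  simp only [pd, tw]
  rw [fderiv_ofReal_exp_mul_apply (hφ.const_mul ϱ) huk, fderiv_const_mul hφ]
  simp only [pdR, smul_apply, smul_eq_mul, ofReal_mul]
  ring

theorem Dm_tw (hφ : DifferentiableAt ℝ φ x) (hu : DifferentiableAt ℝ u x) (j k : Fin d) :
    Dm (tw ϱ φ u) j k x = Real.exp (ϱ * φ x)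
      * (Dm u j k x + ϱ * (pdR j φ x * u x k - pdR k φ x * u x j)) := by
  rw [Dm, Dm, pd_tw hφ hu, pd_tw hφ hu]
  ring

theorem divg_tw (hφ : DifferentiableAt ℝ φ x) (hu : DifferentiableAt ℝ u x) :
    divg (tw ϱ φ u) x = Real.exp (ϱ * φ x) * (divg u x + ϱ * ∑ j, pdR j φ x * u x j) := by
  simp only [divg, pd_tw hφ hu, Finset.mul_sum, ← Finset.sum_add_distrib, mul_add]

theorem ofReal_exp_mul_mul_conj_ofReal_exp_neg_mul (s : ℝ) (z w : ℂ) :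
    (Real.exp s * z) * conj (Real.exp (-s) * w) = z * conj w := by
  rw [map_mul, conj_ofReal, mul_mul_mul_comm, ← ofReal_mul, ← Real.exp_add, add_neg_cancel,
    Real.exp_zero, ofReal_one, one_mul]

theorem norm_sum_Dm_tw_mul_conj_sub_le {γ : ℝ} (hγ : 0 < γ) (hφ : DifferentiableAt ℝ φ x)
    (hφ' : ∀ j, |pdR j φ x| ≤ 1) (hu : DifferentiableAt ℝ u x) :
    ‖∑ j, ∑ k, Dm (tw ϱ φ u) j k x * conj (Dm (tw (-ϱ) φ u) j k x)
        - ((∑ j, ∑ k, normSq (Dm u j k x) : ℝ) : ℂ)‖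
      ≤ γ * ∑ j, ∑ k, normSq (Dm u j k x)
        + (1 / γ + 1) * ϱ ^ 2 * (4 * d * ∑ j, normSq (u x j)) := by
  set B : Fin d → Fin d → ℂ := fun j k => pdR j φ x * u x k - pdR k φ x * u x j
  have hprod : ∀ j k, Dm (tw ϱ φ u) j k x * conj (Dm (tw (-ϱ) φ u) j k x)
      = (Dm u j k x + ϱ * B j k) * conj (Dm u j k x - ϱ * B j k) := fun j k => by
    rw [Dm_tw hφ hu, Dm_tw hφ hu, neg_mul, ofReal_neg, neg_mul, ← sub_eq_add_neg,
      ofReal_exp_mul_mul_conj_ofReal_exp_neg_mul]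
  have hbound := norm_sum_add_mul_conj_sub_mul_sub_normSq_le hγ ϱ
    (fun p : Fin d × Fin d => Dm u p.1 p.2 x) (fun p => B p.1 p.2)
  simp only [Fintype.sum_prod_type] at hbound
  simp only [hprod]
  refine hbound.trans ?_
  gcongr
  simpa using sum_sum_normSq_mul_sub_mul_le hφ' (u x)

theorem norm_divg_tw_mul_conj_sub_le {γ : ℝ} (hγ : 0 < γ) (hφ : DifferentiableAt ℝ φ x)
    (hφ' : ∀ j, |pdR j φ x| ≤ 1) (hu : DifferentiableAt ℝ u x) :
    ‖divg (tw ϱ φ u) x * conj (divg (tw (-ϱ) φ u) x) - normSq (divg u x)‖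
      ≤ γ * normSq (divg u x) + (1 / γ + 1) * ϱ ^ 2 * (d * ∑ j, normSq (u x j)) := by
  rw [divg_tw hφ hu, divg_tw hφ hu, neg_mul, ofReal_neg, neg_mul, ← sub_eq_add_neg,
    ofReal_exp_mul_mul_conj_ofReal_exp_neg_mul]
  refine (norm_add_mul_conj_sub_mul_sub_normSq_le hγ ϱ _ _).trans ?_
  gcongr
  simpa using normSq_sum_mul_le hφ' (u x)

variable {Ω : Set (Edom d)}

theorem continuousOn_pd (hΩ : IsOpen Ω) {f : Edom d → ℂ} (hf : ContDiffOn ℝ 1 f Ω) (j : Fin d) :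
    ContinuousOn (pd j f) Ω :=
  (hf.continuousOn_fderiv_of_isOpen hΩ le_rfl).clm_apply continuousOn_const

theorem continuousOn_Dm (hΩ : IsOpen Ω) (hu : ContDiffOn ℝ 1 u Ω) (j k : Fin d) :
    ContinuousOn (Dm u j k) Ω :=
  (continuousOn_pd hΩ (contDiffOn_pi.1 hu k) j).sub (continuousOn_pd hΩ (contDiffOn_pi.1 hu j) k)

theorem continuousOn_divg (hΩ : IsOpen Ω) (hu : ContDiffOn ℝ 1 u Ω) :
    ContinuousOn (divg u) Ω :=
  continuousOn_finsetSum _ fun j _ => continuousOn_pd hΩ (contDiffOn_pi.1 hu j) j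

theorem contDiffOn_tw (hφ : ContDiff ℝ 1 φ) (hu : ContDiffOn ℝ 1 u Ω) :
    ContDiffOn ℝ 1 (tw ϱ φ u) Ω :=
  contDiffOn_pi' fun k =>
    (ofRealCLM.contDiff.comp (contDiff_const.mul hφ).exp).contDiffOn.mul (contDiffOn_pi.1 hu k)

theorem integrable_and_norm_integral_Dm_tw_sub_le {γ : ℝ} (hΩ : IsOpen Ω) (hγ : 0 < γ)
    (hφ : ContDiff ℝ 1 φ) (hφ' : ∀ j x, |pdR j φ x| ≤ 1) (hu : ContDiffOn ℝ 1 u Ω)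
    (hU : Integrable (fun x => ∑ j, normSq (u x j)) (volume.restrict Ω))
    (hA : Integrable (fun x => ∑ j, ∑ k, normSq (Dm u j k x)) (volume.restrict Ω)) :
    Integrable (fun x => ∑ j, ∑ k, Dm (tw ϱ φ u) j k x * conj (Dm (tw (-ϱ) φ u) j k x))
        (volume.restrict Ω) ∧
      ‖∫ x, ∑ j, ∑ k, Dm (tw ϱ φ u) j k x * conj (Dm (tw (-ϱ) φ u) j k x) ∂(volume.restrict Ω)
          - ((∫ x, ∑ j, ∑ k, normSq (Dm u j k x) ∂(volume.restrict Ω) : ℝ) : ℂ)‖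
        ≤ γ * ∫ x, ∑ j, ∑ k, normSq (Dm u j k x) ∂(volume.restrict Ω)
          + (1 / γ + 1) * ϱ ^ 2 * (4 * d * ∫ x, ∑ j, normSq (u x j) ∂(volume.restrict Ω)) := by
  have hcont_pos := continuousOn_Dm hΩ (contDiffOn_tw (ϱ := ϱ) hφ hu)
  have hcont_neg := continuousOn_Dm hΩ (contDiffOn_tw (ϱ := -ϱ) hφ hu)
  have hmeas : AEStronglyMeasurable
      (fun x => ∑ j, ∑ k, Dm (tw ϱ φ u) j k x * conj (Dm (tw (-ϱ) φ u) j k x))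
      (volume.restrict Ω) :=
    ContinuousOn.aestronglyMeasurable (by fun_prop) hΩ.measurableSet
  rw [← integral_const_mul (4 * (d : ℝ))]
  refine integrable_and_norm_integral_sub_ofReal_le hmeas hA (hU.const_mul _) ?_
  filter_upwards [ae_restrict_mem hΩ.measurableSet] with x hx
  exact norm_sum_Dm_tw_mul_conj_sub_le hγ (hφ.differentiable one_ne_zero x) (hφ' · x)
    ((hu.differentiableOn one_ne_zero).differentiableAt (hΩ.mem_nhds hx))

theorem integrable_and_norm_integral_divg_tw_sub_le {γ : ℝ} (hΩ : IsOpen Ω) (hγ : 0 < γ)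
    (hφ : ContDiff ℝ 1 φ) (hφ' : ∀ j x, |pdR j φ x| ≤ 1) (hu : ContDiffOn ℝ 1 u Ω)
    (hU : Integrable (fun x => ∑ j, normSq (u x j)) (volume.restrict Ω))
    (hD : Integrable (fun x => normSq (divg u x)) (volume.restrict Ω)) :
    Integrable (fun x => divg (tw ϱ φ u) x * conj (divg (tw (-ϱ) φ u) x)) (volume.restrict Ω) ∧
      ‖∫ x, divg (tw ϱ φ u) x * conj (divg (tw (-ϱ) φ u) x) ∂(volume.restrict Ω)
          - ((∫ x, normSq (divg u x) ∂(volume.restrict Ω) : ℝ) : ℂ)‖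
        ≤ γ * ∫ x, normSq (divg u x) ∂(volume.restrict Ω)
          + (1 / γ + 1) * ϱ ^ 2 * (d * ∫ x, ∑ j, normSq (u x j) ∂(volume.restrict Ω)) := by
  have hcont_pos := continuousOn_divg hΩ (contDiffOn_tw (ϱ := ϱ) hφ hu)
  have hcont_neg := continuousOn_divg hΩ (contDiffOn_tw (ϱ := -ϱ) hφ hu)
  have hmeas : AEStronglyMeasurable
      (fun x => divg (tw ϱ φ u) x * conj (divg (tw (-ϱ) φ u) x)) (volume.restrict Ω) :=
    ContinuousOn.aestronglyMeasurable (by fun_prop) hΩ.measurableSet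
  rw [← integral_const_mul (d : ℝ)]
  refine integrable_and_norm_integral_sub_ofReal_le hmeas hD (hU.const_mul _) ?_
  filter_upwards [ae_restrict_mem hΩ.measurableSet] with x hx
  exact norm_divg_tw_mul_conj_sub_le hγ (hφ.differentiable one_ne_zero x) (hφ' · x)
    ((hu.differentiableOn one_ne_zero).differentiableAt (hΩ.mem_nhds hx))

end Twist

theorem norm_half_mul_add_sub_ofReal_le (p q : ℂ) (a b : ℝ) :
    ‖(1 / 2 : ℂ) * p + q - (((1 / 2 : ℝ) * a + b : ℝ) : ℂ)‖ ≤ 1 / 2 * ‖p - a‖ + ‖q - b‖ := by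
  calc _ = ‖(1 / 2 : ℂ) * (p - a) + (q - b)‖ := by push_cast; ring_nf
    _ ≤ _ := by
        refine (norm_add_le _ _).trans (le_of_eq ?_)
        rw [norm_mul, norm_div, norm_one, RCLike.norm_ofNat]

theorem davies_twisted_form_estimate_general (d : ℕ) (γ : ℝ) (hγ0 : 0 < γ) :
    ∃ ω₀ : ℝ, 0 ≤ ω₀ ∧
      ∀ (Ω : Set (Edom d)), IsOpen Ω →
      ∀ (ϱ : ℝ) (φ : Edom d → ℝ), ContDiff ℝ (⊤ : ℕ∞) φ → HasCompactSupport φ →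
        (∀ j : Fin d, ∀ x : Edom d, |fderiv ℝ φ x (EuclideanSpace.single j 1)| ≤ 1) →
      ∀ u : Edom d → Fin d → ℂ, ContDiffOn ℝ 1 u Ω →
        Integrable (fun x => ∑ j, Complex.normSq (u x j)) (volume.restrict Ω) →
        Integrable (fun x => ∑ j, ∑ k, Complex.normSq (Dm u j k x)) (volume.restrict Ω) →
        Integrable (fun x => Complex.normSq (divg u x)) (volume.restrict Ω) →
        -- the twisted form is given by absolutely convergent integrals:
        Integrable (fun x => ∑ j, ∑ k,
            Dm (tw ϱ φ u) j k x * conj (Dm (tw (-ϱ) φ u) j k x)) (volume.restrict Ω)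
        ∧ Integrable (fun x =>
            divg (tw ϱ φ u) x * conj (divg (tw (-ϱ) φ u) x)) (volume.restrict Ω)
        -- and |a_{ϱφ}(u,u) − a(u,u)| ≤ γ a(u,u) + ω₀ ϱ² ‖u‖₂²:
        ∧ norm
            (((1 / 2 : ℂ) * ∫ x, ∑ j, ∑ k,
                Dm (tw ϱ φ u) j k x * conj (Dm (tw (-ϱ) φ u) j k x) ∂(volume.restrict Ω)
              + ∫ x, divg (tw ϱ φ u) x * conj (divg (tw (-ϱ) φ u) x) ∂(volume.restrict Ω))
            - ((((1 / 2 : ℝ) * ∫ x, ∑ j, ∑ k,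
                  Complex.normSq (Dm u j k x) ∂(volume.restrict Ω)
                + ∫ x, Complex.normSq (divg u x) ∂(volume.restrict Ω) : ℝ)) : ℂ))
          ≤ γ * ((1 / 2 : ℝ) * (∫ x, ∑ j, ∑ k,
                  Complex.normSq (Dm u j k x) ∂(volume.restrict Ω))
                + ∫ x, Complex.normSq (divg u x) ∂(volume.restrict Ω))
            + ω₀ * ϱ ^ 2 * ∫ x, ∑ j, Complex.normSq (u x j) ∂(volume.restrict Ω) := by
  refine ⟨3 * d * (1 + 1 / γ), by positivity, fun Ω hΩ ϱ φ hφ _ hφ' u hu hU hA hD => ?_⟩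
  have hφ₁ : ContDiff ℝ 1 φ := hφ.of_le (by simp)
  obtain ⟨hP_int, hP⟩ := integrable_and_norm_integral_Dm_tw_sub_le (ϱ := ϱ) hΩ hγ0 hφ₁ hφ' hu hU hA
  obtain ⟨hQ_int, hQ⟩ := integrable_and_norm_integral_divg_tw_sub_le (ϱ := ϱ) hΩ hγ0 hφ₁ hφ' hu hU hD
  refine ⟨hP_int, hQ_int, (norm_half_mul_add_sub_ofReal_le _ _ _ _).trans ?_⟩
  linarith

theorem davies_twisted_form_estimate (d : ℕ) (hd : 2 ≤ d)
    (γ : ℝ) (hγ0 : 0 < γ) (hγ1 : γ < 1) :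
    ∃ ω₀ : ℝ, 0 ≤ ω₀ ∧
      ∀ (Ω : Set (Edom d)), IsOpen Ω →
      ∀ (ϱ : ℝ) (φ : Edom d → ℝ), ContDiff ℝ (⊤ : ℕ∞) φ → HasCompactSupport φ →
        (∀ j : Fin d, ∀ x : Edom d, |fderiv ℝ φ x (EuclideanSpace.single j 1)| ≤ 1) →
      ∀ u : Edom d → Fin d → ℂ, ContDiffOn ℝ 1 u Ω →
        Integrable (fun x => ∑ j, Complex.normSq (u x j)) (volume.restrict Ω) →
        Integrable (fun x => ∑ j, ∑ k, Complex.normSq (Dm u j k x)) (volume.restrict Ω) →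
        Integrable (fun x => Complex.normSq (divg u x)) (volume.restrict Ω) →
        -- the twisted form is given by absolutely convergent integrals:
        Integrable (fun x => ∑ j, ∑ k,
            Dm (tw ϱ φ u) j k x * conj (Dm (tw (-ϱ) φ u) j k x)) (volume.restrict Ω)
        ∧ Integrable (fun x =>
            divg (tw ϱ φ u) x * conj (divg (tw (-ϱ) φ u) x)) (volume.restrict Ω)
        -- and |a_{ϱφ}(u,u) − a(u,u)| ≤ γ a(u,u) + ω₀ ϱ² ‖u‖₂²:
        ∧ norm
            (((1 / 2 : ℂ) * ∫ x, ∑ j, ∑ k,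
                Dm (tw ϱ φ u) j k x * conj (Dm (tw (-ϱ) φ u) j k x) ∂(volume.restrict Ω)
              + ∫ x, divg (tw ϱ φ u) x * conj (divg (tw (-ϱ) φ u) x) ∂(volume.restrict Ω))
            - ((((1 / 2 : ℝ) * ∫ x, ∑ j, ∑ k,
                  Complex.normSq (Dm u j k x) ∂(volume.restrict Ω)
                + ∫ x, Complex.normSq (divg u x) ∂(volume.restrict Ω) : ℝ)) : ℂ))
          ≤ γ * ((1 / 2 : ℝ) * (∫ x, ∑ j, ∑ k,
                  Complex.normSq (Dm u j k x) ∂(volume.restrict Ω))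
                + ∫ x, Complex.normSq (divg u x) ∂(volume.restrict Ω))
            + ω₀ * ϱ ^ 2 * ∫ x, ∑ j, Complex.normSq (u x j) ∂(volume.restrict Ω) :=
  davies_twisted_form_estimate_general d γ hγ0
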